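/- arXiv:math/0503541 — 6 statements merged into one kernel-verified Lean document; each statement's English description precedes it below -/
import Mathlib

section
/- The function V(x) = (M/γ)(1 - exp(r̃_-(β)x)) satisfies (1/2)σ²β²V''(x) + (βμ - δ - M)V'(x) - γV(x) + M = 0 for all x ≥ 0, with V(0) = 0, and V is strictly increasing, strictly concave, and bounded above by M/γ. -/
/-!
`r̃₋(β)` is the negative root of the characteristic polynomial of the ODE, so
`V = (M/γ)(1 - e^{r̃₋ x})` solves it: the exponential part solves the homogeneous equation and the
constant `M/γ` the inhomogeneous one. Since `r̃₋ < 0` and `M/γ > 0`, `V' = -(M/γ) r̃₋ e^{r̃₋ x} > 0`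
and `V'' = -(M/γ) r̃₋² e^{r̃₋ x} < 0`.
-/

open Real

section QuadraticRoot

variable {A b C r : ℝ}

theorem quadratic_negRoot_isRoot (hA : 0 < A) (hC : 0 ≤ C)
    (hr : r = (-b - √(b ^ 2 + 4 * A * C)) / (2 * A)) : A * r ^ 2 + b * r - C = 0 := by
  have hsq : √(b ^ 2 + 4 * A * C) ^ 2 = b ^ 2 + 4 * A * C := sq_sqrt (by positivity)
  generalize √(b ^ 2 + 4 * A * C) = s at hr hsq
  subst hr
  field_simp
  linear_combination hsq

theorem quadratic_negRoot_neg (hA : 0 < A) (hC : 0 < C)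
    (hr : r = (-b - √(b ^ 2 + 4 * A * C)) / (2 * A)) : r < 0 := by
  have hb : |b| < √(b ^ 2 + 4 * A * C) := by
    rw [← sqrt_sq_eq_abs]
    exact sqrt_lt_sqrt (sq_nonneg b) (by nlinarith)
  rw [hr]
  exact div_neg_of_neg_of_pos (by linarith [neg_abs_le b]) (by positivity)

end QuadraticRoot

/-- The profile `x ↦ K (1 - e^{r x})`, rising from `0` to the level `K` when `K > 0 > r`. -/
noncomputable def expSaturation (K r x : ℝ) : ℝ := K * (1 - exp (r * x))

namespace expSaturation

variable {K r : ℝ}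

@[simp]
theorem apply_zero : expSaturation K r 0 = 0 := by
  simp [expSaturation]

theorem hasDerivAt (x : ℝ) :
    HasDerivAt (expSaturation K r) (-(K * r) * exp (r * x)) x := by
  have h := (((hasDerivAt_id' x).const_mul r).exp.const_sub 1).const_mul K
  exact h.congr_deriv (by ring)

theorem deriv_eq : deriv (expSaturation K r) = fun x ↦ -(K * r) * exp (r * x) :=
  funext fun x ↦ (hasDerivAt x).deriv

theorem deriv_deriv_eq : deriv (deriv (expSaturation K r)) = fun x ↦ -(K * r ^ 2) * exp (r * x) := by
  rw [deriv_eq]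
  funext x
  have h := ((hasDerivAt_id' x).const_mul r).exp.const_mul (-(K * r))
  rw [h.deriv]
  ring

theorem continuous : Continuous (expSaturation K r) := by
  unfold expSaturation
  fun_prop

theorem ode (A B C : ℝ) (hr : A * r ^ 2 + B * r - C = 0) (x : ℝ) :
    A * deriv (deriv (expSaturation K r)) x + B * deriv (expSaturation K r) x
      - C * expSaturation K r x + C * K = 0 := by
  rw [deriv_deriv_eq, deriv_eq, expSaturation]
  linear_combination (-(K * exp (r * x))) * hr

theorem strictMono (hK : 0 < K) (hr : r < 0) : StrictMono (expSaturation K r) := by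
  intro x y hxy
  have : exp (r * y) < exp (r * x) := exp_lt_exp.2 (mul_lt_mul_of_neg_left hxy hr)
  unfold expSaturation
  nlinarith

theorem strictConcaveOn (hK : 0 < K) (hr : r ≠ 0) :
    StrictConcaveOn ℝ Set.univ (expSaturation K r) := by
  refine strictConcaveOn_univ_of_deriv2_neg continuous fun x ↦ ?_
  rw [Function.iterate_succ_apply, Function.iterate_one, deriv_deriv_eq]
  have : 0 < K * r ^ 2 * exp (r * x) := by positivity
  linarith

theorem le_level (hK : 0 ≤ K) (x : ℝ) : expSaturation K r x ≤ K := by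
  have := exp_pos (r * x)
  unfold expSaturation
  nlinarith

end expSaturation

theorem stmt_4_general (μ σ γ M β δ : ℝ) (hσ : 0 < σ) (hγ : 0 < γ)
    (hM : 0 < M) (hβ : 0 < β)
    (r : ℝ)
    (hr : r = (-(β * μ - δ - M) - Real.sqrt ((β * μ - δ - M) ^ 2 + 2 * γ * σ ^ 2 * β ^ 2)) / (β ^ 2 * σ ^ 2))
    (V : ℝ → ℝ) (hV : ∀ x, V x = (M / γ) * (1 - Real.exp (r * x))) :
    (∀ x ≥ (0 : ℝ),
        (1 / 2) * σ ^ 2 * β ^ 2 * deriv (deriv V) x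
          + (β * μ - δ - M) * deriv V x - γ * V x + M = 0) ∧
    V 0 = 0 ∧
    StrictMonoOn V (Set.Ici (0 : ℝ)) ∧
    StrictConcaveOn ℝ (Set.Ici (0 : ℝ)) V ∧
    (∀ x ≥ (0 : ℝ), V x ≤ M / γ) := by
  obtain rfl : V = expSaturation (M / γ) r := funext hV
  have hA : 0 < (1 / 2) * σ ^ 2 * β ^ 2 := by positivity
  have hr' : r = (-(β * μ - δ - M) - √((β * μ - δ - M) ^ 2 + 4 * ((1 / 2) * σ ^ 2 * β ^ 2) * γ))
      / (2 * ((1 / 2) * σ ^ 2 * β ^ 2)) := by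
    rw [hr]; ring_nf
  have hroot := quadratic_negRoot_isRoot hA hγ.le hr'
  have hneg := quadratic_negRoot_neg hA hγ hr'
  have hK : 0 < M / γ := by positivity
  have hlevel : γ * (M / γ) = M := mul_div_cancel₀ M hγ.ne'
  refine ⟨fun x _ ↦ ?_, expSaturation.apply_zero, (expSaturation.strictMono hK hneg).strictMonoOn _,
    (expSaturation.strictConcaveOn hK hneg.ne).subset (Set.subset_univ _) (convex_Ici 0),
    fun x _ ↦ expSaturation.le_level hK.le x⟩
  simpa [hlevel] using expSaturation.ode _ _ γ hroot x (K := M / γ)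

/-- `V(x) = (M/γ)(1 - exp(r̃₋(β) x))` solves
`(1/2)σ²β² V'' + (βμ - δ - M) V' - γ V + M = 0` on `[0, ∞)` with `V 0 = 0`,
and `V` is strictly increasing, strictly concave, and bounded above by `M/γ`. -/
theorem stmt_4 (μ σ γ M β δ : ℝ) (hμ : 0 < μ) (hσ : 0 < σ) (hγ : 0 < γ)
    (hM : 0 < M) (hβ : 0 < β) (hδ : 0 ≤ δ)
    (r : ℝ)
    (hr : r = (-(β * μ - δ - M) - Real.sqrt ((β * μ - δ - M) ^ 2 + 2 * γ * σ ^ 2 * β ^ 2)) / (β ^ 2 * σ ^ 2))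
    (V : ℝ → ℝ) (hV : ∀ x, V x = (M / γ) * (1 - Real.exp (r * x))) :
    (∀ x ≥ (0 : ℝ),
        (1 / 2) * σ ^ 2 * β ^ 2 * deriv (deriv V) x
          + (β * μ - δ - M) * deriv V x - γ * V x + M = 0) ∧
    V 0 = 0 ∧
    StrictMonoOn V (Set.Ici (0 : ℝ)) ∧
    StrictConcaveOn ℝ (Set.Ici (0 : ℝ)) V ∧
    (∀ x ≥ (0 : ℝ), V x ≤ M / γ) :=
  stmt_4_general μ σ γ M β δ hσ hγ hM hβ r hr V hV
end

section
/- Suppose a twice differentiable function V satisfies (μa(x)/2)V'(x) - (δ + M)V'(x) - γV(x) + M = 0 with V''(x) = -μV'(x)/(σ²a(x)) and V'(x) > 0 on an interval, for a differentiable positive function a. Then a satisfies a(x)a'(x) = (a(x) - c̃)(μ² + 2σ²γ)/(μσ²), where c̃ = 2μ(δ+M)/(μ² + 2σ²γ). -/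
open Real

/-!
Differentiating the first-order ODE along the open set where it holds gives
`(μ a'/2) V' + (μ a/2 - (δ + M)) V'' - γ V' = 0`. Substituting the prescribed `V''` and cancelling
the nonzero factor `V'` leaves an algebraic relation between `a` and `a'`, which is the claim.
-/

theorem deriv_affine_coeff_ode_eq_zero {I : Set ℝ} (hI : IsOpen I) {a V : ℝ → ℝ}
    {p q γ M x : ℝ} (hx : x ∈ I) (ha : DifferentiableAt ℝ a x) (hV : DifferentiableAt ℝ V x)
    (hV' : DifferentiableAt ℝ (deriv V) x)
    (hODE : ∀ y ∈ I, (p * a y + q) * deriv V y - γ * V y + M = 0) :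
    p * deriv a x * deriv V x + (p * a x + q) * deriv (deriv V) x - γ * deriv V x = 0 := by
  have hderiv : HasDerivAt (fun y => (p * a y + q) * deriv V y - γ * V y + M)
      (p * deriv a x * deriv V x + (p * a x + q) * deriv (deriv V) x - γ * deriv V x) x :=
    ((((ha.hasDerivAt.const_mul p).add_const q).mul hV'.hasDerivAt).sub
      (hV.hasDerivAt.const_mul γ)).add_const M
  have hzero : (fun y => (p * a y + q) * deriv V y - γ * V y + M) =ᶠ[nhds x] fun _ => 0 := by
    filter_upwards [hI.mem_nhds hx] with y hy using hODE y hy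
  rw [← hderiv.deriv, hzero.deriv_eq, deriv_const]

theorem stmt_5_general (μ σ γ M δ : ℝ) (hμ : 0 < μ) (hσ : 0 < σ) (hγ : 0 < γ)
    (I : Set ℝ) (hI : IsOpen I)
    (V a : ℝ → ℝ)
    (hVdiff : ∀ x ∈ I, DifferentiableAt ℝ V x)
    (hV'diff : ∀ x ∈ I, DifferentiableAt ℝ (deriv V) x)
    (hadiff : ∀ x ∈ I, DifferentiableAt ℝ a x)
    (hapos : ∀ x ∈ I, 0 < a x)
    (hV'pos : ∀ x ∈ I, 0 < deriv V x)
    (hODE : ∀ x ∈ I,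
      (μ * a x / 2) * deriv V x - (δ + M) * deriv V x - γ * V x + M = 0)
    (hV'' : ∀ x ∈ I, deriv (deriv V) x = -μ * deriv V x / (σ ^ 2 * a x)) :
    ∀ x ∈ I,
      a x * deriv a x
        = (a x - 2 * μ * (δ + M) / (μ ^ 2 + 2 * σ ^ 2 * γ))
            * (μ ^ 2 + 2 * σ ^ 2 * γ) / (μ * σ ^ 2) := by
  intro x hx
  have key := deriv_affine_coeff_ode_eq_zero (p := μ / 2) (q := -(δ + M)) (γ := γ) (M := M)
    hI hx (hadiff x hx) (hVdiff x hx) (hV'diff x hx) fun y hy => by linear_combination hODE y hy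
  rw [hV'' x hx] at key
  have ha := (hapos x hx).ne'
  have hV' := (hV'pos x hx).ne'
  have hK : μ ^ 2 + 2 * σ ^ 2 * γ ≠ 0 := by positivity
  have hσ2 : σ ^ 2 ≠ 0 := by positivity
  have hμ0 := hμ.ne'
  -- `key` reads `V'/(2σ²a) · (μσ²a a' - a(μ² + 2σ²γ) + 2μ(δ + M)) = 0`
  have hrel :
      μ * σ ^ 2 * (a x * deriv a x) = a x * (μ ^ 2 + 2 * σ ^ 2 * γ) - 2 * μ * (δ + M) := by
    field_simp at key
    apply mul_left_cancel₀ hV'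
    linear_combination key
  field_simp
  linear_combination hrel

/-- If `V` satisfies `(μ a(x)/2) V'(x) - (δ+M) V'(x) - γ V(x) + M = 0`
together with `V''(x) = -μ V'(x)/(σ² a(x))` and `V'(x) > 0` on an open interval `I`,
for a differentiable positive function `a`, then
`a(x) a'(x) = (a(x) - c̃) (μ² + 2σ²γ)/(μσ²)` on `I`, where
`c̃ = 2μ(δ+M)/(μ² + 2σ²γ)`. -/
theorem stmt_5 (μ σ γ M δ : ℝ) (hμ : 0 < μ) (hσ : 0 < σ) (hγ : 0 < γ)
    (hM : 0 < M) (hδ : 0 ≤ δ)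
    (I : Set ℝ) (hI : IsOpen I)
    (V a : ℝ → ℝ)
    (hVdiff : ∀ x ∈ I, DifferentiableAt ℝ V x)
    (hV'diff : ∀ x ∈ I, DifferentiableAt ℝ (deriv V) x)
    (hadiff : ∀ x ∈ I, DifferentiableAt ℝ a x)
    (hapos : ∀ x ∈ I, 0 < a x)
    (hV'pos : ∀ x ∈ I, 0 < deriv V x)
    (hODE : ∀ x ∈ I,
      (μ * a x / 2) * deriv V x - (δ + M) * deriv V x - γ * V x + M = 0)
    (hV'' : ∀ x ∈ I, deriv (deriv V) x = -μ * deriv V x / (σ ^ 2 * a x)) :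
    ∀ x ∈ I,
      a x * deriv a x
        = (a x - 2 * μ * (δ + M) / (μ ^ 2 + 2 * σ ^ 2 * γ))
            * (μ ^ 2 + 2 * σ ^ 2 * γ) / (μ * σ ^ 2) :=
  stmt_5_general μ σ γ M δ hμ hσ hγ I hI V a hVdiff hV'diff hadiff hapos hV'pos hODE hV''
end

section
/- Suppose 2δ/μ < α and αμ > δ. Let r_±(α) be the roots of (σ²α²/2)r² + (αμ - δ)r - γ = 0. Then the quantity x_α = (1/(r_+(α) - r_-(α))) · log( [r_-(α)(μ + ασ²r_-(α))] / [r_+(α)(μ + ασ²r_+(α))] ) is well defined (the argument of the logarithm is positive) and strictly positive. -/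
open Real

/-- If `2δ/μ < α` and `αμ > δ`, then in
`x_α = (1/(r₊(α) - r₋(α))) log([r₋(α)(μ + ασ²r₋(α))]/[r₊(α)(μ + ασ²r₊(α))])`
the argument of the logarithm is positive and `x_α > 0`. -/
theorem stmt_8 (μ σ γ α δ : ℝ) (hμ : 0 < μ) (hσ : 0 < σ) (hγ : 0 < γ)
    (hα : 0 < α) (hδ : 0 ≤ δ) (h2δ : 2 * δ / μ < α) (hαμ : α * μ > δ)
    (rp rm : ℝ)
    (hrp : rp = (-(α * μ - δ) + Real.sqrt ((α * μ - δ) ^ 2 + 2 * σ ^ 2 * α ^ 2 * γ)) / (σ ^ 2 * α ^ 2))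
    (hrm : rm = (-(α * μ - δ) - Real.sqrt ((α * μ - δ) ^ 2 + 2 * σ ^ 2 * α ^ 2 * γ)) / (σ ^ 2 * α ^ 2)) :
    0 < (rm * (μ + α * σ ^ 2 * rm)) / (rp * (μ + α * σ ^ 2 * rp)) ∧
    0 < (1 / (rp - rm))
        * Real.log ((rm * (μ + α * σ ^ 2 * rm)) / (rp * (μ + α * σ ^ 2 * rp))) := by
  set A : ℝ := α * μ - δ with hA
  set D : ℝ := Real.sqrt (A ^ 2 + 2 * σ ^ 2 * α ^ 2 * γ) with hD
  have hs : 0 < σ ^ 2 * α ^ 2 := by positivity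
  have hAδ : δ < A := by
    have hmul := (div_lt_iff₀ hμ).mp h2δ
    simp only [hA]; nlinarith
  have hA0 : 0 < A := lt_of_le_of_lt hδ hAδ
  have hD2 : D ^ 2 = A ^ 2 + 2 * σ ^ 2 * α ^ 2 * γ := by
    rw [hD, sq_sqrt]; positivity
  have hAD : A < D := by
    rw [hD, show A ^ 2 + 2 * σ ^ 2 * α ^ 2 * γ
        = A ^ 2 + 2 * σ ^ 2 * α ^ 2 * γ from rfl]
    nlinarith [Real.sq_sqrt (show (0:ℝ) ≤ A ^ 2 + 2 * σ ^ 2 * α ^ 2 * γ by positivity),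
      Real.sqrt_nonneg (A ^ 2 + 2 * σ ^ 2 * α ^ 2 * γ)]
  have hδD : δ < D := lt_trans hAδ hAD
  -- sign facts
  have hrp0 : 0 < rp := by rw [hrp]; apply div_pos; linarith; exact hs
  have hrm0 : rm < 0 := by
    rw [hrm]; apply div_neg_of_neg_of_pos; linarith; exact hs
  have hmrp : μ + α * σ ^ 2 * rp = (δ + D) / α := by
    rw [hrp]; field_simp; ring
  have hmrm : μ + α * σ ^ 2 * rm = (δ - D) / α := by
    rw [hrm]; field_simp; ring
  have hprp : 0 < μ + α * σ ^ 2 * rp := by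
    rw [hmrp]; positivity
  have hprm : μ + α * σ ^ 2 * rm < 0 := by
    rw [hmrm]; apply div_neg_of_neg_of_pos; linarith; exact hα
  have hden : 0 < rp * (μ + α * σ ^ 2 * rp) := mul_pos hrp0 hprp
  have hnum : 0 < rm * (μ + α * σ ^ 2 * rm) := mul_pos_of_neg_of_neg hrm0 hprm
  have hD0 : 0 < D := lt_trans hA0 hAD
  have key : rm * (μ + α * σ ^ 2 * rm) - rp * (μ + α * σ ^ 2 * rp)
      = 2 * D * (A - δ) / (σ ^ 2 * α ^ 2 * α) := by
    rw [hmrp, hmrm, hrp, hrm]; field_simp; ring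
  have harg1 : 1 < (rm * (μ + α * σ ^ 2 * rm)) / (rp * (μ + α * σ ^ 2 * rp)) := by
    rw [one_lt_div hden]
    have : 0 < 2 * D * (A - δ) / (σ ^ 2 * α ^ 2 * α) := by
      apply div_pos (by nlinarith) (by positivity)
    linarith
  constructor
  · exact div_pos hnum hden
  · have hdiff : rp - rm = 2 * D / (σ ^ 2 * α ^ 2) := by rw [hrp, hrm]; ring
    have : 0 < rp - rm := by rw [hdiff]; positivity
    exact mul_pos (by positivity) (Real.log_pos harg1)
end

section
/- If 2δ/μ < α < β, then the chain of inequalities M_0(2δ/μ) < M_0(α) < M_α < M_β holds, where M_0(z) = z²σ²γ/(2(zμ - δ)) and M_z = (z - 2δμ/(μ² + 2σ²γ))·(μ² + 2σ²γ)/(2μ). -/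
/-- If `2δ/μ < α < β`, then
`M₀(2δ/μ) < M₀(α) < M_α < M_β`. -/
theorem stmt_13 (μ σ γ δ α β : ℝ) (hμ : 0 < μ) (hσ : 0 < σ) (hγ : 0 < γ)
    (hδ : 0 < δ) (hα : 0 < α) (hαβ : α < β) (h2δ : 2 * δ / μ < α)
    (M₀ Mz : ℝ → ℝ)
    (hM₀ : ∀ z, M₀ z = z ^ 2 * σ ^ 2 * γ / (2 * (z * μ - δ)))
    (hMz : ∀ z, Mz z = (z - 2 * δ * μ / (μ ^ 2 + 2 * σ ^ 2 * γ))
        * (μ ^ 2 + 2 * σ ^ 2 * γ) / (2 * μ)) :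
    M₀ (2 * δ / μ) < M₀ α ∧ M₀ α < Mz α ∧ Mz α < Mz β := by
  have hαμ : 2 * δ < α * μ := (div_lt_iff₀ hμ).mp h2δ
  have hK : (0:ℝ) < μ ^ 2 + 2 * σ ^ 2 * γ := by positivity
  have hd2 : (0:ℝ) < 2 * (α * μ - δ) := by linarith
  refine ⟨?_, ?_, ?_⟩
  · rw [hM₀, hM₀]
    have h1 : 2 * δ / μ * μ - δ = δ := by field_simp; ring
    rw [h1]
    rw [div_lt_div_iff₀ (by linarith) hd2]
    have hpos : 0 < α * μ - 2 * δ := by linarith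
    have hkey : 0 < (α * μ - 2 * δ) ^ 2 := by positivity
    have h2 : (2 * δ / μ) ^ 2 = 4 * δ ^ 2 / μ ^ 2 := by ring
    rw [h2, div_mul_eq_mul_div, div_mul_eq_mul_div, div_mul_eq_mul_div,
      div_lt_iff₀ (by positivity)]
    nlinarith [mul_pos (mul_pos hkey (mul_pos (mul_pos (mul_pos hσ hσ) hγ) hδ)) two_pos]
  · rw [hM₀, hMz]
    have hMz' : (α - 2 * δ * μ / (μ ^ 2 + 2 * σ ^ 2 * γ)) * (μ ^ 2 + 2 * σ ^ 2 * γ) / (2 * μ)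
        = (α * (μ ^ 2 + 2 * σ ^ 2 * γ) - 2 * δ * μ) / (2 * μ) := by
      field_simp
    rw [hMz', div_lt_div_iff₀ hd2 (by positivity)]
    nlinarith [mul_pos (mul_pos (show (0:ℝ) < α * μ - 2 * δ by linarith)
      (show (0:ℝ) < α * μ - δ by linarith)) hμ,
      mul_pos (mul_pos (show (0:ℝ) < α * μ - 2 * δ by linarith) hα)
        (mul_pos (mul_pos hσ hσ) hγ)]
  · rw [hMz, hMz]
    rw [div_lt_div_iff₀ (by positivity) (by positivity)]
    nlinarith [mul_pos (mul_pos (sub_pos.mpr hαβ) hK) (mul_pos two_pos hμ)]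
end

section
/- The equation exp((r_+(α) - r_-(α))x) = [r_-(α)(r_-(α) - r̃_-(α))] / [r_+(α)(r_+(α) - r̃_-(α))] has a (unique) positive solution x if and only if M > α²σ²γ/(2(αμ - δ)). -/
open Real


private lemma aux_fwd (a M c qt : ℝ) (hqt2 : qt ^ 2 = (a - M) ^ 2 + c)
    (hqt0 : 0 ≤ qt) (hE : 0 < a + M - qt) : c < 4 * a * M := by
  nlinarith [mul_pos hE (show (0:ℝ) < a + M + qt by linarith)]

private lemma aux_bwd (a M c qt : ℝ) (hqt2 : qt ^ 2 = (a - M) ^ 2 + c)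
    (hqt0 : 0 ≤ qt) (ha : 0 < a) (hM : 0 < M) (hc : c < 4 * a * M) :
    qt < a + M := by
  by_contra hc'
  push_neg at hc'
  nlinarith [mul_le_mul hc' hc' (by linarith : (0:ℝ) ≤ a + M) hqt0]

set_option maxHeartbeats 1000000 in
/-- The equation
`exp((r₊(α) - r₋(α)) x) = [r₋(α)(r₋(α) - r̃₋(α))]/[r₊(α)(r₊(α) - r̃₋(α))]`
has a unique positive solution `x` if and only if `M > α²σ²γ/(2(αμ - δ))`. -/
theorem stmt_14 (μ σ γ M α δ : ℝ) (hμ : 0 < μ) (hσ : 0 < σ) (hγ : 0 < γ)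
    (hM : 0 < M) (hα : 0 < α) (hδ : 0 ≤ δ) (hαμ : α * μ > δ)
    (rp rm rtm : ℝ)
    (hrp : rp = (-(α * μ - δ) + Real.sqrt ((α * μ - δ) ^ 2 + 2 * σ ^ 2 * α ^ 2 * γ)) / (σ ^ 2 * α ^ 2))
    (hrm : rm = (-(α * μ - δ) - Real.sqrt ((α * μ - δ) ^ 2 + 2 * σ ^ 2 * α ^ 2 * γ)) / (σ ^ 2 * α ^ 2))
    (hrtm : rtm = (-(α * μ - δ - M) - Real.sqrt ((α * μ - δ - M) ^ 2 + 2 * γ * σ ^ 2 * α ^ 2)) / (α ^ 2 * σ ^ 2)) :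
    (∃! x : ℝ, 0 < x ∧
        Real.exp ((rp - rm) * x) = (rm * (rm - rtm)) / (rp * (rp - rtm)))
      ↔ M > α ^ 2 * σ ^ 2 * γ / (2 * (α * μ - δ)) := by
  have ha : 0 < α * μ - δ := sub_pos.mpr hαμ
  have hs : (0:ℝ) < σ ^ 2 * α ^ 2 := by positivity
  have hσ0 : σ ≠ 0 := ne_of_gt hσ
  have hα0 : α ≠ 0 := ne_of_gt hα
  set q := Real.sqrt ((α * μ - δ) ^ 2 + 2 * σ ^ 2 * α ^ 2 * γ) with hq_def
  set qt := Real.sqrt ((α * μ - δ - M) ^ 2 + 2 * γ * σ ^ 2 * α ^ 2) with hqt_def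
  have hq2 : q ^ 2 = (α * μ - δ) ^ 2 + 2 * σ ^ 2 * α ^ 2 * γ := Real.sq_sqrt (by positivity)
  have hqt2 : qt ^ 2 = (α * μ - δ - M) ^ 2 + 2 * γ * σ ^ 2 * α ^ 2 := Real.sq_sqrt (by positivity)
  have hq0 : 0 ≤ q := Real.sqrt_nonneg _
  have hqt0 : 0 ≤ qt := Real.sqrt_nonneg _
  clear_value q qt
  clear hq_def hqt_def
  have hqa : α * μ - δ < q := by nlinarith [mul_pos hs hγ]
  have hqpos : 0 < q := lt_trans ha hqa
  -- rp - rm = 2q/s > 0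
  have hD : rp - rm = 2 * q / (σ ^ 2 * α ^ 2) := by rw [hrp, hrm]; ring
  have hDpos : 0 < rp - rm := by rw [hD]; positivity
  -- rp > 0
  have hrppos : 0 < rp := by rw [hrp]; apply div_pos _ hs; linarith
  -- rp - rtm = (q - M + qt)/s > 0
  have hrprtm : rp - rtm = (q - M + qt) / (σ ^ 2 * α ^ 2) := by
    rw [hrp, hrtm]; field_simp; ring
  have hqqtM : 0 < q - M + qt := by nlinarith [hq2, hqt2, hqa, hqt0, hM, mul_pos hγ hs]
  have hden : 0 < rp * (rp - rtm) := by
    apply mul_pos hrppos; rw [hrprtm]; positivity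
  have hs2 : (0:ℝ) < (σ ^ 2 * α ^ 2) ^ 2 := by positivity
  -- difference of numerator and denominator
  have hdiff : rm * (rm - rtm) - rp * (rp - rtm)
      = 2 * q * ((α * μ - δ) + M - qt) / (σ ^ 2 * α ^ 2) ^ 2 := by
    rw [hrp, hrm, hrtm]; field_simp; ring
  -- key algebraic equivalence
  have hkey : (1 < rm * (rm - rtm) / (rp * (rp - rtm))) ↔
      M > α ^ 2 * σ ^ 2 * γ / (2 * (α * μ - δ)) := by
    rw [one_lt_div hden, gt_iff_lt, div_lt_iff₀ (by positivity)]
    constructor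
    · intro h
      have h3 : 0 < 2 * q * ((α * μ - δ) + M - qt) / (σ ^ 2 * α ^ 2) ^ 2 := by
        rw [← hdiff]; linarith
      have h2 : 0 < 2 * q * ((α * μ - δ) + M - qt) := by
        have heq : 2 * q * ((α * μ - δ) + M - qt)
            = (2 * q * ((α * μ - δ) + M - qt) / (σ ^ 2 * α ^ 2) ^ 2) * (σ ^ 2 * α ^ 2) ^ 2 := by
          field_simp
        rw [heq]; exact mul_pos h3 hs2
      have hE : 0 < (α * μ - δ) + M - qt := by
        rcases mul_pos_iff.mp h2 with ⟨_, h⟩ | ⟨h, _⟩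
        · exact h
        · linarith
      have := aux_fwd (α * μ - δ) M (2 * γ * (σ ^ 2 * α ^ 2)) qt (by linarith [hqt2]) hqt0 hE
      nlinarith [this]
    · intro h
      have hE : qt < (α * μ - δ) + M :=
        aux_bwd (α * μ - δ) M (2 * γ * (σ ^ 2 * α ^ 2)) qt (by linarith [hqt2]) hqt0 ha hM
          (by nlinarith)
      have h2 : 0 < rm * (rm - rtm) - rp * (rp - rtm) := by
        rw [hdiff]
        apply div_pos _ hs2
        exact mul_pos (by linarith) (by linarith)
      linarith
  constructor
  · rintro ⟨x, ⟨hx, hex⟩, -⟩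
    have h1 : (1:ℝ) < Real.exp ((rp - rm) * x) := by
      rw [show (1:ℝ) = Real.exp 0 from (Real.exp_zero).symm]
      exact Real.exp_lt_exp.mpr (by positivity)
    rw [hex] at h1
    exact hkey.mp h1
  · intro hMgt
    have hR : 1 < rm * (rm - rtm) / (rp * (rp - rtm)) := hkey.mpr hMgt
    have hRpos : 0 < rm * (rm - rtm) / (rp * (rp - rtm)) := lt_trans one_pos hR
    refine ⟨Real.log (rm * (rm - rtm) / (rp * (rp - rtm))) / (rp - rm), ⟨?_, ?_⟩, ?_⟩
    · exact div_pos (Real.log_pos hR) hDpos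
    · rw [mul_comm, div_mul_cancel₀ _ (ne_of_gt hDpos), Real.exp_log hRpos]
    · rintro y ⟨hy, hey⟩
      have hxy : Real.exp ((rp - rm) * y)
          = Real.exp (Real.log (rm * (rm - rtm) / (rp * (rp - rtm)))) := by
        rw [hey, Real.exp_log hRpos]
      have h2 := Real.exp_injective hxy
      field_simp
      linarith [h2]
end

section
/- Let V(x) = K(exp(r_+(β)x) - exp(r_-(β)x)) on [0, x₁] with K > 0, where r_+(β) > 0 > r_-(β) are the roots of (σ²β²/2)r² + (βμ - δ)r - γ = 0, and suppose V''(x₁) = 0. Then V''' > 0 on [0, x₁), hence V'' < 0 and V' > V'(x₁) on [0, x₁); in particular V is strictly concave and strictly increasing on [0, x₁]. -/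
/-!
The roots satisfy `r₋ < 0 < r₊`, and every derivative of `V` is again of the form
`a e^{r₊ x} - b e^{r₋ x}`; for odd orders `a > 0 > b`, so `V'` and `V'''` are positive on all
of `ℝ`. Hence `V''` is strictly increasing, so it is negative left of its zero `x₁`, which
makes `V'` strictly decreasing and `V` strictly concave on `(-∞, x₁]`.
-/

open Real

lemma neg_add_sqrt_sq_add_pos (b : ℝ) {c : ℝ} (hc : 0 < c) : 0 < -b + √(b ^ 2 + c) := by
  have : |b| < √(b ^ 2 + c) := by
    rw [← sqrt_sq_eq_abs]
    exact sqrt_lt_sqrt (sq_nonneg b) (by linarith)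
  linarith [le_abs_self b]

lemma neg_sub_sqrt_sq_add_neg (b : ℝ) {c : ℝ} (hc : 0 < c) : -b - √(b ^ 2 + c) < 0 := by
  have := neg_add_sqrt_sq_add_pos (-b) hc
  rw [neg_sq] at this
  linarith

lemma hasDerivAt_mul_exp_sub_mul_exp (a b p q x : ℝ) :
    HasDerivAt (fun x => a * exp (p * x) - b * exp (q * x))
      (a * p * exp (p * x) - b * q * exp (q * x)) x := by
  have hp := ((hasDerivAt_id x).const_mul p).exp.const_mul a
  have hq := ((hasDerivAt_id x).const_mul q).exp.const_mul b
  exact (hp.sub hq).congr_deriv (by simp only [id, mul_one]; ring)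

lemma deriv_mul_exp_sub_mul_exp (a b p q : ℝ) :
    deriv (fun x => a * exp (p * x) - b * exp (q * x))
      = fun x => a * p * exp (p * x) - b * q * exp (q * x) :=
  funext fun x => (hasDerivAt_mul_exp_sub_mul_exp a b p q x).deriv

lemma differentiable_mul_exp_sub_mul_exp (a b p q : ℝ) :
    Differentiable ℝ (fun x => a * exp (p * x) - b * exp (q * x)) :=
  fun x => (hasDerivAt_mul_exp_sub_mul_exp a b p q x).differentiableAt

lemma mul_exp_sub_mul_exp_pos {a b : ℝ} (ha : 0 < a) (hb : b < 0) (p q x : ℝ) :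
    0 < a * exp (p * x) - b * exp (q * x) := by
  have := mul_neg_of_neg_of_pos hb (exp_pos (q * x))
  linarith [mul_pos ha (exp_pos (p * x))]

theorem stmt_18_general (μ σ γ δ β K x₁ : ℝ) (hσ : 0 < σ) (hγ : 0 < γ)
    (hβ : 0 < β) (hK : 0 < K)
    (rp rm : ℝ)
    (hrp : rp = (-(β * μ - δ) + Real.sqrt ((β * μ - δ) ^ 2 + 2 * σ ^ 2 * β ^ 2 * γ)) / (σ ^ 2 * β ^ 2))
    (hrm : rm = (-(β * μ - δ) - Real.sqrt ((β * μ - δ) ^ 2 + 2 * σ ^ 2 * β ^ 2 * γ)) / (σ ^ 2 * β ^ 2))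
    (V : ℝ → ℝ) (hV : ∀ x, V x = K * (Real.exp (rp * x) - Real.exp (rm * x)))
    (hV'' : deriv (deriv V) x₁ = 0) :
    (∀ x ∈ Set.Ico (0 : ℝ) x₁, 0 < deriv (deriv (deriv V)) x) ∧
    (∀ x ∈ Set.Ico (0 : ℝ) x₁, deriv (deriv V) x < 0) ∧
    (∀ x ∈ Set.Ico (0 : ℝ) x₁, deriv V x > deriv V x₁) ∧
    StrictConcaveOn ℝ (Set.Icc (0 : ℝ) x₁) V ∧
    StrictMonoOn V (Set.Icc (0 : ℝ) x₁) := by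
  have hrp0 : 0 < rp := hrp ▸ div_pos (neg_add_sqrt_sq_add_pos _ (by positivity)) (by positivity)
  have hrm0 : rm < 0 :=
    hrm ▸ div_neg_of_neg_of_pos (neg_sub_sqrt_sq_add_neg _ (by positivity)) (by positivity)
  have hVexp : V = fun x => K * exp (rp * x) - K * exp (rm * x) := funext fun x => by rw [hV]; ring
  have hV' : deriv V = fun x => K * rp * exp (rp * x) - K * rm * exp (rm * x) := by
    rw [hVexp, deriv_mul_exp_sub_mul_exp]
  have hV''' : deriv (deriv (deriv V))
      = fun x => K * rp * rp * rp * exp (rp * x) - K * rm * rm * rm * exp (rm * x) := by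
    rw [hV', deriv_mul_exp_sub_mul_exp, deriv_mul_exp_sub_mul_exp]
  have hV'_pos (x : ℝ) : 0 < deriv V x :=
    hV' ▸ mul_exp_sub_mul_exp_pos (by positivity) (mul_neg_of_pos_of_neg hK hrm0) _ _ _
  have hV'''_pos (x : ℝ) : 0 < deriv (deriv (deriv V)) x := by
    have hrm3 : K * rm * rm * rm < 0 := by
      nlinarith [mul_pos (mul_pos hK (neg_pos.2 hrm0)) (neg_pos.2 hrm0)]
    exact hV''' ▸ mul_exp_sub_mul_exp_pos (by positivity) hrm3 _ _ _
  have hV''_neg (x : ℝ) (hx : x < x₁) : deriv (deriv V) x < 0 :=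
    hV'' ▸ strictMono_of_deriv_pos hV'''_pos hx
  have hV_diff : Differentiable ℝ V := hVexp ▸ differentiable_mul_exp_sub_mul_exp _ _ _ _
  have hV'_diff : Differentiable ℝ (deriv V) := hV' ▸ differentiable_mul_exp_sub_mul_exp _ _ _ _
  have hV'_anti : StrictAntiOn (deriv V) (Set.Iic x₁) :=
    strictAntiOn_of_deriv_neg (convex_Iic x₁) hV'_diff.continuous.continuousOn
      fun x hx => hV''_neg x (by rwa [interior_Iic] at hx)
  have hV_concave : StrictConcaveOn ℝ (Set.Iic x₁) V :=
    strictConcaveOn_of_deriv2_neg (convex_Iic x₁) hV_diff.continuous.continuousOn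
      fun x hx => hV''_neg x (by rwa [interior_Iic] at hx)
  refine ⟨fun x _ => hV'''_pos x, fun x hx => hV''_neg x hx.2,
    fun x hx => hV'_anti hx.2.le Set.self_mem_Iic hx.2,
    hV_concave.subset Set.Icc_subset_Iic_self (convex_Icc 0 x₁),
    (strictMono_of_deriv_pos hV'_pos).strictMonoOn _⟩

/-- For `V(x) = K(exp(r₊(β)x) - exp(r₋(β)x))` with `K > 0`, if
`V''(x₁) = 0` then `V''' > 0` on `[0, x₁)`, hence `V'' < 0` and `V' > V'(x₁)` on
`[0, x₁)`; in particular `V` is strictly concave and strictly increasing on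
`[0, x₁]`. -/
theorem stmt_18 (μ σ γ δ β K x₁ : ℝ) (hμ : 0 < μ) (hσ : 0 < σ) (hγ : 0 < γ)
    (hδ : 0 ≤ δ) (hβ : 0 < β) (hK : 0 < K) (hx₁ : 0 < x₁)
    (rp rm : ℝ)
    (hrp : rp = (-(β * μ - δ) + Real.sqrt ((β * μ - δ) ^ 2 + 2 * σ ^ 2 * β ^ 2 * γ)) / (σ ^ 2 * β ^ 2))
    (hrm : rm = (-(β * μ - δ) - Real.sqrt ((β * μ - δ) ^ 2 + 2 * σ ^ 2 * β ^ 2 * γ)) / (σ ^ 2 * β ^ 2))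
    (V : ℝ → ℝ) (hV : ∀ x, V x = K * (Real.exp (rp * x) - Real.exp (rm * x)))
    (hV'' : deriv (deriv V) x₁ = 0) :
    (∀ x ∈ Set.Ico (0 : ℝ) x₁, 0 < deriv (deriv (deriv V)) x) ∧
    (∀ x ∈ Set.Ico (0 : ℝ) x₁, deriv (deriv V) x < 0) ∧
    (∀ x ∈ Set.Ico (0 : ℝ) x₁, deriv V x > deriv V x₁) ∧
    StrictConcaveOn ℝ (Set.Icc (0 : ℝ) x₁) V ∧
    StrictMonoOn V (Set.Icc (0 : ℝ) x₁) :=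
  stmt_18_general μ σ γ δ β K x₁ hσ hγ hβ hK rp rm hrp hrm V hV hV''
end
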